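/- There exists a probability vector p ∈ ℝⁿ with pᵀ A_{ij} = pᵀ for all edges (v_i, v_j) ∈ E if and only if the local stochastic matrices A_{ij} are holonomic for G; moreover, when it exists, such a probability vector is unique and has all entries positive. -/

import Mathlib

open Matrix Finset

/-- The local stochastic matrix `A_{ij}`: identity except for the 2×2 principal
submatrix on rows/columns `i,j`, which is `[[1-a_{ij}, a_{ij}],[a_{ji}, 1-a_{ji}]]`. -/
def locMat {n : ℕ} (a : Fin n → Fin n → ℝ) (i j : Fin n) : Matrix (Fin n) (Fin n) ℝ :=
  Matrix.of fun k l =>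
    if k = i then (if l = i then 1 - a i j else if l = j then a i j else 0)
    else if k = j then (if l = i then a j i else if l = j then 1 - a j i else 0)
    else if k = l then 1 else 0

/-- `R_w`: the product of the ratios `r` along the (directed) edges of a walk `w`. -/
def Rwalk {n : ℕ} (r : Fin n → Fin n → ℝ) {G : SimpleGraph (Fin n)} {u v : Fin n}
    (w : G.Walk u v) : ℝ :=
  (w.darts.map fun d => r d.toProd.1 d.toProd.2).prod

/-- The local stochastic matrices (given by the weights `a`) are holonomic for `G`:
`R_C = 1` for every cycle `C` of length greater than 2. -/
def Holonomic {n : ℕ} (G : SimpleGraph (Fin n)) (a : Fin n → Fin n → ℝ) : Prop :=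
  ∀ (u : Fin n) (c : G.Walk u u), c.IsCycle → 2 < c.length →
    Rwalk (fun i j => a i j / a j i) c = 1


lemma vecMul_locMat_eq_iff {n : ℕ} (a : Fin n → Fin n → ℝ) (p : Fin n → ℝ) {i j : Fin n}
    (hij : i ≠ j) :
    Matrix.vecMul p (locMat a i j) = p ↔ p i * a i j = p j * a j i := by
  have key : ∀ l, Matrix.vecMul p (locMat a i j) l =
      if l = i then p i * (1 - a i j) + p j * a j i
      else if l = j then p i * a i j + p j * (1 - a j i)
      else p l := by
    intro l
    have hterm : ∀ k, p k * (locMat a i j) k l =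
        (if k = i then p i * (if l = i then 1 - a i j else if l = j then a i j else 0) else 0)
        + (if k = j then p j * (if l = i then a j i else if l = j then 1 - a j i else 0) else 0)
        + (if k = l ∧ k ≠ i ∧ k ≠ j then p l else 0) := by
      intro k
      by_cases hk : k = i
      · subst hk; simp [locMat, hij]
      · by_cases hk2 : k = j
        · subst hk2; simp [locMat, hij, Ne.symm hij]
        · by_cases hkl : k = l
          · subst hkl; simp [locMat, hk, hk2]
          · simp [locMat, hk, hk2, hkl]
    rw [show Matrix.vecMul p (locMat a i j) l = ∑ k, p k * (locMat a i j) k l by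
      simp [Matrix.vecMul, dotProduct]]
    rw [Finset.sum_congr rfl fun k _ => hterm k]
    rw [Finset.sum_add_distrib, Finset.sum_add_distrib]
    rw [Finset.sum_ite_eq' Finset.univ i, Finset.sum_ite_eq' Finset.univ j]
    simp only [Finset.mem_univ, if_true]
    by_cases hl : l = i
    · subst hl
      rw [show (∑ k, if k = l ∧ k ≠ l ∧ k ≠ j then p l else 0) = 0 from
        Finset.sum_eq_zero fun k _ => by by_cases h : k = l <;> simp [h]]
      simp [hij, Ne.symm hij]
    · by_cases hl2 : l = j
      · subst hl2
        rw [show (∑ k, if k = l ∧ k ≠ i ∧ k ≠ l then p l else 0) = 0 from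
          Finset.sum_eq_zero fun k _ => by by_cases h : k = l <;> simp [h]]
        simp [hij, Ne.symm hij, hl]
      · rw [show (∑ k, if k = l ∧ k ≠ i ∧ k ≠ j then p l else 0) = p l by
          rw [Finset.sum_eq_single l]
          · simp [hl, hl2]
          · intro k _ hkl; simp [fun h : k = l => hkl h]
          · simp]
        simp [hl, hl2]
  constructor
  · intro hfix
    have := congrFun hfix i
    rw [key i] at this
    simp only [if_pos rfl, if_true] at this
    linarith
  · intro hbal
    funext l
    rw [key l]
    by_cases hl : l = i
    · subst hl; simp only [if_pos rfl, if_true]; linarith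
    · by_cases hl2 : l = j
      · subst hl2; simp only [hl, if_false, if_pos rfl, if_true]; linarith
      · simp [hl, hl2]

section aux
variable {n : ℕ} {G : SimpleGraph (Fin n)} (r : Fin n → Fin n → ℝ)

@[simp] lemma Rwalk_nil {u : Fin n} : Rwalk r (SimpleGraph.Walk.nil : G.Walk u u) = 1 := rfl

@[simp] lemma Rwalk_cons {u v w : Fin n} (h : G.Adj u v) (p : G.Walk v w) :
    Rwalk r (SimpleGraph.Walk.cons h p) = r u v * Rwalk r p := by
  simp [Rwalk]

@[simp] lemma Rwalk_append {u v w : Fin n} (p : G.Walk u v) (q : G.Walk v w) :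
    Rwalk r (p.append q) = Rwalk r p * Rwalk r q := by
  simp [Rwalk, SimpleGraph.Walk.darts_append]

lemma Rwalk_rotate {u v : Fin n} (c : G.Walk v v) (h : u ∈ c.support) :
    Rwalk r (c.rotate u h) = Rwalk r c :=
  List.Perm.prod_eq (((c.rotate_darts u h).map _).perm)

lemma Rwalk_concat {u v w : Fin n} (p : G.Walk u v) (h : G.Adj v w) :
    Rwalk r (p.concat h) = Rwalk r p * r v w := by
  simp [Rwalk, SimpleGraph.Walk.darts_concat]

lemma length_rotate {u v : Fin n} (c : G.Walk v v) (h : u ∈ c.support) :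
    (c.rotate u h).length = c.length := by
  have := congrArg SimpleGraph.Walk.length (c.take_spec h)
  rw [SimpleGraph.Walk.length_append] at this
  rw [SimpleGraph.Walk.rotate, SimpleGraph.Walk.length_append, ← this, Nat.add_comm]

end aux

lemma isCycle_of_tail_nodup {n : ℕ} {G : SimpleGraph (Fin n)} {u : Fin n}
    (c : G.Walk u u) (hlen : 3 ≤ c.length) (hnd : c.support.tail.Nodup) : c.IsCycle := by
  cases c with
  | nil => simp at hlen
  | @cons _ v _ h p =>
    have hp : p.support.Nodup := by simpa using hnd
    have hpath : p.IsPath := SimpleGraph.Walk.IsPath.mk' hp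
    have hne : s(u, v) ∉ p.edges := by
      intro hmem
      cases p with
      | nil => simp at hmem
      | cons h2 p2 =>
        obtain ⟨x, q, h', hc⟩ := SimpleGraph.Walk.exists_cons_eq_concat h2 p2
        rw [hc] at hmem hp
        rw [SimpleGraph.Walk.support_concat] at hp
        rw [List.nodup_append] at hp
        have hu_notin : u ∉ q.support := fun hu => hp.2.2 u hu u (by simp) rfl
        rw [SimpleGraph.Walk.edges_concat, List.concat_eq_append, List.mem_append] at hmem
        rcases hmem with hmem | hmem
        · exact hu_notin (q.fst_mem_support_of_mem_edges hmem)
        · have hmem' : s(u, v) = s(x, u) := by simpa using hmem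
          have : (u = x ∧ v = u) ∨ (u = u ∧ v = x) := Sym2.eq_iff.mp hmem'
          have hvx : v = x := by
            rcases this with ⟨h1, h2'⟩ | ⟨_, h2'⟩
            · exact absurd (h2' ▸ h) (G.irrefl)
            · exact h2'
          subst hvx
          have : q = SimpleGraph.Walk.nil := by
            rw [← SimpleGraph.Walk.isPath_iff_eq_nil]
            exact SimpleGraph.Walk.IsPath.mk' hp.1
          subst this
          rw [hc] at hlen
          simp at hlen
    exact ⟨⟨⟨by
      rw [SimpleGraph.Walk.edges_cons, List.nodup_cons]
      exact ⟨hne, hpath.isTrail.edges_nodup⟩⟩, by simp⟩, hnd⟩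

/-- Key lemma: under the local relation and the cycle condition, every closed walk
has ratio-product 1. -/
lemma Rwalk_closed {n : ℕ} {G : SimpleGraph (Fin n)} {r : Fin n → Fin n → ℝ}
    (hr2 : ∀ i j, G.Adj i j → r i j * r j i = 1)
    (hcyc : ∀ (u : Fin n) (c : G.Walk u u), c.IsCycle → 2 < c.length → Rwalk r c = 1) :
    ∀ (N : ℕ) (u : Fin n) (c : G.Walk u u), c.length ≤ N → Rwalk r c = 1 := by
  intro N
  induction N with
  | zero =>
    intro u c hc
    cases c with
    | nil => rfl
    | cons h p => simp at hc
  | succ N ih =>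
    intro u c hlen
    by_cases hnd : c.support.tail.Nodup
    · cases c with
      | nil => rfl
      | @cons _ v _ h p =>
        cases p with
        | nil => exact absurd h (G.irrefl)
        | @cons _ w _ h2 p2 =>
          cases p2 with
          | nil =>
            -- closed walk of length 2: u - v - u
            rw [Rwalk_cons, Rwalk_cons, Rwalk_nil, mul_one]
            exact hr2 u v h
          | cons h3 p3 =>
            have h3le : 3 ≤ (SimpleGraph.Walk.cons h (SimpleGraph.Walk.cons h2
                (SimpleGraph.Walk.cons h3 p3))).length := by
              simp [SimpleGraph.Walk.length_cons]
            exact hcyc u _ (isCycle_of_tail_nodup _ h3le hnd) (by omega)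
    · -- a vertex repeats in the tail: rotate and split
      obtain ⟨x, hdup⟩ := List.exists_duplicate_iff_not_nodup.mpr hnd
      have hcount : 2 ≤ List.count x c.support.tail :=
        List.duplicate_iff_two_le_count.mp hdup
      have hxs : x ∈ c.support := by
        rw [SimpleGraph.Walk.support_eq_cons]
        exact List.mem_cons_of_mem _ hdup.mem
      set c' := c.rotate x hxs with hc'
      have hRc : Rwalk r c' = Rwalk r c := Rwalk_rotate r c hxs
      have hlc : c'.length = c.length := length_rotate c hxs
      have hcount' : 2 ≤ List.count x c'.support.tail := by
        rwa [List.Perm.count_eq ((SimpleGraph.Walk.support_rotate c x hxs).perm)]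
      -- c' is a closed walk at x in which x occurs at least twice in the tail
      rw [← hRc]
      cases hc2 : c' with
      | nil => rfl
      | @cons _ y _ h' w' =>
        rw [hc2] at hcount' hlc
        have hcount'' : 2 ≤ List.count x w'.support := by
          simpa using hcount'
        have hxw : x ∈ w'.support := List.count_pos_iff.mp (by omega)
        have hspec : (w'.takeUntil x hxw).append (w'.dropUntil x hxw) = w' :=
          w'.take_spec hxw
        have hdne : (w'.dropUntil x hxw).length ≠ 0 := by
          intro h0
          have hdnil : w'.dropUntil x hxw = SimpleGraph.Walk.nil :=
            SimpleGraph.Walk.Nil.eq_nil (SimpleGraph.Walk.nil_iff_length_eq.mpr h0)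
          rw [hdnil, SimpleGraph.Walk.append_nil] at hspec
          have := SimpleGraph.Walk.count_support_takeUntil_eq_one (p := w') hxw
          rw [hspec] at this
          omega
        have hlt : (w'.takeUntil x hxw).length + (w'.dropUntil x hxw).length = w'.length := by
          have := congrArg SimpleGraph.Walk.length hspec
          rwa [SimpleGraph.Walk.length_append] at this
        have hwN : w'.length ≤ N := by
          rw [SimpleGraph.Walk.length_cons] at hlc
          omega
        have h1 : Rwalk r (SimpleGraph.Walk.cons h' (w'.takeUntil x hxw)) = 1 :=
          ih x _ (by rw [SimpleGraph.Walk.length_cons]; omega)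
        have h2 : Rwalk r (w'.dropUntil x hxw) = 1 := ih x _ (by omega)
        calc Rwalk r (SimpleGraph.Walk.cons h' w')
            = r x y * Rwalk r w' := Rwalk_cons r h' w'
          _ = r x y * (Rwalk r (w'.takeUntil x hxw) * Rwalk r (w'.dropUntil x hxw)) := by
              have hq := congrArg (Rwalk r) hspec
              rw [← hq, Rwalk_append]
          _ = (r x y * Rwalk r (w'.takeUntil x hxw)) * Rwalk r (w'.dropUntil x hxw) := by ring
          _ = Rwalk r (SimpleGraph.Walk.cons h' (w'.takeUntil x hxw)) * Rwalk r (w'.dropUntil x hxw) := by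
              rw [Rwalk_cons]
          _ = 1 := by rw [h1, h2, one_mul]

section more
variable {n : ℕ} {G : SimpleGraph (Fin n)}

lemma Rwalk_pos (a : Fin n → Fin n → ℝ) (ha : ∀ i j, G.Adj i j → a i j ∈ Set.Ioo (0:ℝ) 1)
    {u v : Fin n} (w : G.Walk u v) : 0 < Rwalk (fun i j => a i j / a j i) w := by
  induction w with
  | nil => norm_num [Rwalk_nil]
  | cons h p ih =>
    rw [Rwalk_cons]
    exact mul_pos (div_pos (ha _ _ h).1 (ha _ _ h.symm).1) ih

lemma p_zero_propagate (a : Fin n → Fin n → ℝ)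
    (ha : ∀ i j, G.Adj i j → a i j ∈ Set.Ioo (0:ℝ) 1) (p : Fin n → ℝ)
    (hbal : ∀ i j, G.Adj i j → p i * a i j = p j * a j i)
    {u v : Fin n} (w : G.Walk u v) (h0 : p u = 0) : p v = 0 := by
  induction w with
  | nil => exact h0
  | @cons x y z h w ih =>
    apply ih
    have hb := hbal x y h
    rw [h0, zero_mul] at hb
    have : a y x ≠ 0 := ne_of_gt (ha y x h.symm).1
    exact (mul_eq_zero.mp hb.symm).resolve_right this

lemma pos_of_fixed (hGc : G.Connected) (a : Fin n → Fin n → ℝ)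
    (ha : ∀ i j, G.Adj i j → a i j ∈ Set.Ioo (0:ℝ) 1) (p : Fin n → ℝ)
    (h0 : ∀ i, 0 ≤ p i) (hs : ∑ i, p i = 1)
    (hbal : ∀ i j, G.Adj i j → p i * a i j = p j * a j i) : ∀ i, 0 < p i := by
  intro i
  rcases (h0 i).lt_or_eq with h | h
  · exact h
  · exfalso
    have hz : ∀ v, p v = 0 := by
      intro v
      obtain ⟨w⟩ := hGc.preconnected i v
      exact p_zero_propagate a ha p hbal w h.symm
    rw [Finset.sum_eq_zero (fun v _ => hz v)] at hs
    norm_num at hs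

lemma Rwalk_telescope (a : Fin n → Fin n → ℝ)
    (ha : ∀ i j, G.Adj i j → a i j ∈ Set.Ioo (0:ℝ) 1) (p : Fin n → ℝ)
    (hpos : ∀ i, 0 < p i)
    (hbal : ∀ i j, G.Adj i j → p i * a i j = p j * a j i)
    {u v : Fin n} (w : G.Walk u v) :
    Rwalk (fun i j => a i j / a j i) w = p v / p u := by
  induction w with
  | nil => rw [Rwalk_nil, div_self (ne_of_gt (hpos _))]
  | @cons x y z h w ih =>
    rw [Rwalk_cons, ih]
    have h1 : a x y / a y x = p y / p x := by
      rw [div_eq_div_iff (ne_of_gt (ha y x h.symm).1) (ne_of_gt (hpos x))]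
      have := hbal x y h
      nlinarith [this]
    rw [h1]
    rw [div_mul_div_comm, mul_comm (p y) (p z), mul_div_mul_right _ _ (ne_of_gt (hpos y))]
end more

lemma exists_fixed_of_holonomic {n : ℕ} {G : SimpleGraph (Fin n)} (hGc : G.Connected)
    (a : Fin n → Fin n → ℝ) (ha : ∀ i j, G.Adj i j → a i j ∈ Set.Ioo (0:ℝ) 1)
    (hol : ∀ (u : Fin n) (c : G.Walk u u), c.IsCycle → 2 < c.length →
      Rwalk (fun i j => a i j / a j i) c = 1) :
    ∃ p : Fin n → ℝ, (∀ i, 0 ≤ p i) ∧ ∑ i, p i = 1 ∧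
      ∀ i j, G.Adj i j → p i * a i j = p j * a j i := by
  haveI hne : Nonempty (Fin n) := hGc.nonempty
  set r : Fin n → Fin n → ℝ := fun i j => a i j / a j i with hr
  have hr2 : ∀ i j, G.Adj i j → r i j * r j i = 1 := by
    intro i j hij
    have h1 := (ha i j hij).1
    have h2 := (ha j i hij.symm).1
    rw [hr]
    field_simp
  have key : ∀ (u : Fin n) (c : G.Walk u u), Rwalk r c = 1 :=
    fun u c => Rwalk_closed hr2 hol c.length u c le_rfl
  obtain ⟨u0⟩ := hne
  have hreach : ∀ i, Nonempty (G.Walk u0 i) := fun i => hGc.preconnected u0 i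
  set w : ∀ i, G.Walk u0 i := fun i => (hreach i).some with hw
  set q : Fin n → ℝ := fun i => Rwalk r (w i) with hq
  have hqpos : ∀ i, 0 < q i := fun i => Rwalk_pos a ha (w i)
  have indep : ∀ (i : Fin n) (w1 w2 : G.Walk u0 i), Rwalk r w1 = Rwalk r w2 := by
    intro i w1 w2
    have h1 : Rwalk r (w1.append w2.reverse) = 1 := key _ _
    have h2 : Rwalk r (w2.append w2.reverse) = 1 := key _ _
    rw [Rwalk_append] at h1 h2
    have hw2 : Rwalk r w2 ≠ 0 := ne_of_gt (Rwalk_pos a ha w2)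
    have hrev : Rwalk r w2.reverse = 1 / Rwalk r w2 := by
      rw [eq_div_iff hw2, mul_comm]
      exact h2
    have hdiv : Rwalk r w1 / Rwalk r w2 = 1 := by
      rw [div_eq_mul_inv, inv_eq_one_div, ← hrev]
      exact h1
    exact (div_eq_one_iff_eq hw2).mp hdiv
  have hedge : ∀ i j, G.Adj i j → q i * a i j = q j * a j i := by
    intro i j hij
    have h1 : Rwalk r ((w i).concat hij) = Rwalk r (w j) := indep j _ (w j)
    rw [Rwalk_concat] at h1
    have haji : a j i ≠ 0 := ne_of_gt (ha j i hij.symm).1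
    have : q i * (a i j / a j i) = q j := h1
    field_simp at this
    linarith
  set S := ∑ i, q i with hS
  have hSpos : 0 < S := Finset.sum_pos (fun i _ => hqpos i) ⟨u0, Finset.mem_univ _⟩
  refine ⟨fun i => q i / S, fun i => le_of_lt (div_pos (hqpos i) hSpos), ?_, ?_⟩
  · rw [← Finset.sum_div, ← hS, div_self (ne_of_gt hSpos)]
  · intro i j hij
    have h := hedge i j hij
    rw [div_mul_eq_mul_div, div_mul_eq_mul_div, h]


/-- A probability vector `p` with `pᵀ A_{ij} = pᵀ` for all edges exists iff the local
stochastic matrices are holonomic for `G`; moreover such a `p` is unique and has all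
entries positive. -/
theorem stmt5 {n : ℕ} (G : SimpleGraph (Fin n)) (hGc : G.Connected)
    (a : Fin n → Fin n → ℝ) (ha : ∀ i j, G.Adj i j → a i j ∈ Set.Ioo (0:ℝ) 1) :
    ((∃ p : Fin n → ℝ, (∀ i, 0 ≤ p i) ∧ ∑ i, p i = 1 ∧
        ∀ i j, G.Adj i j → Matrix.vecMul p (locMat a i j) = p) ↔ Holonomic G a) ∧
    (∀ p p' : Fin n → ℝ,
      ((∀ i, 0 ≤ p i) ∧ ∑ i, p i = 1 ∧
        ∀ i j, G.Adj i j → Matrix.vecMul p (locMat a i j) = p) →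
      ((∀ i, 0 ≤ p' i) ∧ ∑ i, p' i = 1 ∧
        ∀ i j, G.Adj i j → Matrix.vecMul p' (locMat a i j) = p') →
      p = p') ∧
    (∀ p : Fin n → ℝ,
      ((∀ i, 0 ≤ p i) ∧ ∑ i, p i = 1 ∧
        ∀ i j, G.Adj i j → Matrix.vecMul p (locMat a i j) = p) →
      ∀ i, 0 < p i) := by
  have hbal_of : ∀ p : Fin n → ℝ,
      ((∀ i, 0 ≤ p i) ∧ ∑ i, p i = 1 ∧
        ∀ i j, G.Adj i j → Matrix.vecMul p (locMat a i j) = p) →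
      ∀ i j, G.Adj i j → p i * a i j = p j * a j i :=
    fun p hp i j hij => (vecMul_locMat_eq_iff a p hij.ne).mp (hp.2.2 i j hij)
  have hpos3 : ∀ p : Fin n → ℝ,
      ((∀ i, 0 ≤ p i) ∧ ∑ i, p i = 1 ∧
        ∀ i j, G.Adj i j → Matrix.vecMul p (locMat a i j) = p) →
      ∀ i, 0 < p i :=
    fun p hp => pos_of_fixed hGc a ha p hp.1 hp.2.1 (hbal_of p hp)
  refine ⟨⟨?_, ?_⟩, ?_, hpos3⟩
  · rintro ⟨p, hp⟩ u c _ _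
    rw [Rwalk_telescope a ha p (hpos3 p hp) (hbal_of p hp) c,
      div_self (ne_of_gt (hpos3 p hp u))]
  · intro hol
    obtain ⟨p, h0, hs, hbal⟩ := exists_fixed_of_holonomic hGc a ha hol
    exact ⟨p, h0, hs, fun i j hij => (vecMul_locMat_eq_iff a p hij.ne).mpr (hbal i j hij)⟩
  · intro p p' hp hp'
    haveI hne : Nonempty (Fin n) := hGc.nonempty
    obtain ⟨u0⟩ := hne
    have hppos := hpos3 p hp
    have hppos' := hpos3 p' hp'
    have hb := hbal_of p hp
    have hb' := hbal_of p' hp'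
    have hratio : ∀ i, p i * p' u0 = p' i * p u0 := by
      intro i
      obtain ⟨wk⟩ := hGc.preconnected u0 i
      have e1 := Rwalk_telescope a ha p hppos hb wk
      have e2 := Rwalk_telescope a ha p' hppos' hb' wk
      rw [e2] at e1
      have := (div_eq_div_iff (ne_of_gt (hppos' u0)) (ne_of_gt (hppos u0))).mp e1
      linarith
    have hu0 : p u0 = p' u0 := by
      have hsum : ∑ i, p i * p' u0 = ∑ i, p' i * p u0 :=
        Finset.sum_congr rfl (fun i _ => hratio i)
      rw [← Finset.sum_mul, ← Finset.sum_mul, hp.2.1, hp'.2.1, one_mul, one_mul] at hsum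
      exact hsum.symm
    funext i
    have h := hratio i
    rw [← hu0] at h
    exact mul_right_cancel₀ (ne_of_gt (hppos u0)) h
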